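/- arXiv:1409.1019 — 5 statements merged into one kernel-verified Lean document; each statement's English description precedes it below -/
import Mathlib

section
/- If P = {P_n} is an equivariant sequence of maps on vector fields (whenever a linear map A intertwines f with g, A intertwines P(f) with P(g)), then P maps direct sums to direct sums: P_{n+m}(f ⊕ g) = P_n(f) ⊕ P_m(g), where (f ⊕ g)(x,y) = (f(x), g(y)). -/
/-- The direct sum `f ⊕ g` of vector fields, as a vector field on `ℝ^(n+m)`. -/
def oplus (n m : ℕ) (f : (Fin n → ℝ) → Fin n → ℝ) (g : (Fin m → ℝ) → Fin m → ℝ) :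
    (Fin (n + m) → ℝ) → Fin (n + m) → ℝ :=
  fun z => Fin.append (f fun i => z (Fin.castAdd m i)) (g fun i => z (Fin.natAdd n i))

/-- An equivariant sequence of maps on vector fields maps direct
sums to direct sums. -/
theorem equivariant_seq_direct_sum
    (P : ∀ n : ℕ, ((Fin n → ℝ) → Fin n → ℝ) → ((Fin n → ℝ) → Fin n → ℝ))
    (hequi : ∀ (n m : ℕ) (A : (Fin n → ℝ) →ₗ[ℝ] (Fin m → ℝ))
      (f : (Fin n → ℝ) → Fin n → ℝ) (g : (Fin m → ℝ) → Fin m → ℝ),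
      (∀ x, g (A x) = A (f x)) → ∀ x, P m g (A x) = A (P n f x)) :
    ∀ (n m : ℕ) (f : (Fin n → ℝ) → Fin n → ℝ) (g : (Fin m → ℝ) → Fin m → ℝ),
      P (n + m) (oplus n m f g) = oplus n m (P n f) (P m g) := by
  intro n m f g
  set π₁ : (Fin (n + m) → ℝ) →ₗ[ℝ] (Fin n → ℝ) := LinearMap.funLeft ℝ ℝ (Fin.castAdd m)
  set π₂ : (Fin (n + m) → ℝ) →ₗ[ℝ] (Fin m → ℝ) := LinearMap.funLeft ℝ ℝ (Fin.natAdd n)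
  have h1 : ∀ x, f (π₁ x) = π₁ (oplus n m f g x) := by
    intro x; funext i
    have e : π₁ x = fun j => x (Fin.castAdd m j) := rfl
    rw [e]
    simp [π₁, oplus, LinearMap.funLeft_apply, Fin.append_left, Function.comp]
  have h2 : ∀ x, g (π₂ x) = π₂ (oplus n m f g x) := by
    intro x; funext i
    have e : π₂ x = fun j => x (Fin.natAdd n j) := rfl
    rw [e]
    simp [π₂, oplus, LinearMap.funLeft_apply, Fin.append_right, Function.comp]
  have H1 := hequi (n + m) n π₁ (oplus n m f g) f h1
  have H2 := hequi (n + m) m π₂ (oplus n m f g) g h2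
  funext z i
  refine Fin.addCases (fun i => ?_) (fun i => ?_) i
  · have := congrFun (H1 z) i
    simpa [π₁, oplus, LinearMap.funLeft_apply, Fin.append_left, LinearMap.funLeft, LinearMap.coe_mk, AddHom.coe_mk, Function.comp_def] using this.symm
  · have := congrFun (H2 z) i
    simpa [π₂, oplus, LinearMap.funLeft_apply, Fin.append_right, LinearMap.funLeft, LinearMap.coe_mk, AddHom.coe_mk, Function.comp_def] using this.symm
end

section
/- Suppose P is a map sending each smooth vector field f on ℝ² to a vector field of the form P(f) = λ·(Df)f + μ·(div f)·f, with fixed scalars λ, μ. If P is equivariant with respect to the projection π(x₁,x₂) = x₁, in the sense that whenever π intertwines f : ℝ² → ℝ² with h : ℝ → ℝ (i.e., h(x₁) = (f(x))¹ for all x) one has π(P(f)(x)) = (λ h h')(x₁) + μ·(h'·h)(x₁) holds accordingly, applied in particular to f(x₁,x₂)=(1,x₂) and h ≡ 1, then μ = 0. -/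
/-- The divergence of a vector field on `ℝ²`. -/
noncomputable def div2 (f : (Fin 2 → ℝ) → Fin 2 → ℝ) (x : Fin 2 → ℝ) : ℝ :=
  ∑ i : Fin 2, fderiv ℝ (fun y => f y i) x (Pi.single i 1)

lemma comp_eq (i : Fin 2) : (fun y : Fin 2 → ℝ => (![1, y 1] : Fin 2 → ℝ) i) =
    (if i = 1 then (fun y => y 1) else fun _ => (1:ℝ)) := by
  fin_cases i <;> simp

lemma fderiv_comp1 (x : Fin 2 → ℝ) :
    fderiv ℝ (fun y : Fin 2 → ℝ => y 1) x = ContinuousLinearMap.proj 1 := by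
  exact (ContinuousLinearMap.proj (R := ℝ) (φ := fun _ : Fin 2 => ℝ) 1).fderiv

lemma diff_comp (i : Fin 2) (x : Fin 2 → ℝ) :
    DifferentiableAt ℝ (fun y : Fin 2 → ℝ => (![1, y 1] : Fin 2 → ℝ) i) x := by
  rw [comp_eq]
  fin_cases i
  · simp
  · simp only [if_pos rfl]
    exact (ContinuousLinearMap.proj (R := ℝ) (φ := fun _ : Fin 2 => ℝ) 1).differentiableAt

/-- If `P f = λ (Df)f + μ (div f) f` is equivariant with respect
to the projection `π (x₁, x₂) = x₁`, applied in particular to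
`f (x₁, x₂) = (1, x₂)` and `h ≡ 1`, then `μ = 0`. -/
theorem mu_vanishes (lam mu : ℝ)
    (P : ((Fin 2 → ℝ) → Fin 2 → ℝ) → ((Fin 2 → ℝ) → Fin 2 → ℝ))
    (hP : ∀ f x, P f x = lam • fderiv ℝ f x (f x) + mu • (div2 f x • f x))
    (hequi : ∀ x : Fin 2 → ℝ,
      P (fun y => ![1, y 1]) x 0 =
        lam * ((1 : ℝ) * deriv (fun _ : ℝ => (1 : ℝ)) (x 0)) +
          mu * (deriv (fun _ : ℝ => (1 : ℝ)) (x 0) * (1 : ℝ))) :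
    mu = 0 := by
  set x : Fin 2 → ℝ := fun _ => 0 with hx
  have key := hequi x
  rw [hP] at key
  have hdiv : div2 (fun y => ![1, y 1]) x = 1 := by
    unfold div2
    rw [Fin.sum_univ_two, comp_eq 0, comp_eq 1]
    simp [fderiv_comp1]
  have hfd : fderiv ℝ (fun y : Fin 2 → ℝ => (![1, y 1] : Fin 2 → ℝ)) x
        (![1, x 1]) 0 = 0 := by
    have : fderiv ℝ (fun (y : Fin 2 → ℝ) (i : Fin 2) => (![1, y 1] : Fin 2 → ℝ) i) x =
        ContinuousLinearMap.pi
          (fun i => fderiv ℝ (fun y : Fin 2 → ℝ => (![1, y 1] : Fin 2 → ℝ) i) x) :=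
      fderiv_pi (fun i => diff_comp i x)
    rw [show (fun y : Fin 2 → ℝ => (![1, y 1] : Fin 2 → ℝ)) =
        (fun (y : Fin 2 → ℝ) (i : Fin 2) => (![1, y 1] : Fin 2 → ℝ) i) from rfl, this]
    rw [ContinuousLinearMap.pi_apply, comp_eq 0]
    simp
  simp only [Pi.add_apply, Pi.smul_apply, hdiv, hfd, deriv_const] at key
  simp only [Matrix.cons_val_zero, smul_eq_mul, mul_zero, zero_mul, add_zero, one_smul,
    mul_one, zero_add] at key
  linarith [key]
end

section
/- Let μ be an aromatic molecule with k vertices, identify V(μ) = [k], and consider the polynomial vector field g on ℝ^k defined by g^j(x) = Π_{i ∈ P(j)} x_i (empty product = 1). Then the value F(μ)(g)(0) equals σ(μ), the number of graph automorphisms of μ. -/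
/-- Iterated partial derivative of a scalar function on `ℝⁿ` in the directions
given by a list of coordinate indices. -/
noncomputable def pderiv (n : ℕ) : List (Fin n) → ((Fin n → ℝ) → ℝ) → ((Fin n → ℝ) → ℝ)
  | [], h => h
  | i :: l, h => fun x => fderiv ℝ (pderiv n l h) x (Pi.single i 1)

/-- The scalar elementary differential of the rootless graph with vertex set
`Fin k` and edges `v → out v`. -/
noncomputable def eldScalar (k : ℕ) (out : Fin k → Fin k)
    (g : (Fin k → ℝ) → Fin k → ℝ) (x : Fin k → ℝ) : ℝ :=
  ∑ ν : Fin k → Fin k,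
    ∏ v : Fin k,
      pderiv k (((Finset.univ.filter fun u => out u = v).toList).map ν)
        (fun y => g y (ν v)) x

lemma fderiv_mono_single {k : ℕ} (S : Finset (Fin k)) (x : Fin k → ℝ) (i : Fin k) :
    fderiv ℝ (fun y : Fin k → ℝ => ∏ j ∈ S, y j) x (Pi.single i 1) =
      if i ∈ S then ∏ m ∈ S.erase i, x m else 0 := by
  have h : HasFDerivAt (fun y : Fin k → ℝ => ∏ j ∈ S, y j)
      (∑ j ∈ S, (∏ m ∈ S.erase j, x m) • (ContinuousLinearMap.proj j :
        (Fin k → ℝ) →L[ℝ] ℝ)) x := by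
    have := HasFDerivAt.finset_prod (u := S) (g := fun j (y : Fin k → ℝ) => y j)
      (g' := fun j => (ContinuousLinearMap.proj j : (Fin k → ℝ) →L[ℝ] ℝ)) (x := x)
      (fun j _ => (ContinuousLinearMap.proj j : (Fin k → ℝ) →L[ℝ] ℝ).hasFDerivAt)
    exact this
  rw [h.fderiv]
  simp only [ContinuousLinearMap.coe_sum', Finset.sum_apply,
    ContinuousLinearMap.coe_smul', Pi.smul_apply, ContinuousLinearMap.proj_apply,
    Pi.single_apply, smul_eq_mul, mul_ite, mul_one, mul_zero]
  rw [Finset.sum_ite_eq' S i fun j => ∏ m ∈ S.erase j, x m]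

lemma pderiv_mono {k : ℕ} (l : List (Fin k)) (S : Finset (Fin k)) :
    pderiv k l (fun y => ∏ i ∈ S, y i) =
      fun x => if (↑l : Multiset (Fin k)) ≤ S.val then ∏ i ∈ S \ l.toFinset, x i else 0 := by
  induction l with
  | nil => simp [pderiv]
  | cons i l ih =>
    funext x
    show fderiv ℝ (pderiv k l fun y => ∏ i ∈ S, y i) x (Pi.single i 1) = _
    rw [ih]
    by_cases hc : (↑l : Multiset (Fin k)) ≤ S.val
    · simp only [hc, if_true]
      rw [fderiv_mono_single]
      have hset : S \ (i :: l).toFinset = (S \ l.toFinset).erase i := by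
        ext a
        simp only [Finset.mem_sdiff, List.toFinset_cons, Finset.mem_insert,
          Finset.mem_erase, List.mem_toFinset]
        tauto
      have hmem : ((↑(i :: l) : Multiset (Fin k)) ≤ S.val) ↔ i ∈ S \ l.toFinset := by
        constructor
        · intro h
          have hnd : (↑(i :: l) : Multiset (Fin k)).Nodup :=
            Multiset.nodup_of_le h S.nodup
          rw [Multiset.coe_nodup, List.nodup_cons] at hnd
          have hiS : i ∈ S.val := Multiset.mem_of_le h (by simp)
          simp only [Finset.mem_sdiff, List.mem_toFinset]
          exact ⟨Finset.mem_def.2 hiS, hnd.1⟩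
        · intro h
          rw [Finset.mem_sdiff, List.mem_toFinset] at h
          rw [show ((↑(i :: l) : Multiset (Fin k)) = i ::ₘ ↑l) from rfl,
            Multiset.le_iff_count]
          intro a
          rw [Multiset.count_cons]
          by_cases ha : a = i
          · subst ha
            have : Multiset.count a (↑l : Multiset (Fin k)) = 0 :=
              Multiset.count_eq_zero.2 (by simpa using h.2)
            rw [this]
            simpa using Multiset.one_le_count_iff_mem.2 (by simpa using h.1)
          · simpa [ha] using Multiset.le_iff_count.1 hc a
      rw [hset]
      by_cases hi : i ∈ S \ l.toFinset
      · simp [hi, hmem.2 hi]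
      · rw [if_neg hi, if_neg (fun h => hi (hmem.1 h))]
    · have hc' : ¬ ((↑(i :: l) : Multiset (Fin k)) ≤ S.val) := fun h =>
        hc (le_trans (by simpa using Multiset.le_cons_self (↑l : Multiset (Fin k)) i) h)
      simp only [hc, if_false, hc', fderiv_const_apply]
      simp

lemma pderiv_mono_zero {k : ℕ} (l : List (Fin k)) (S : Finset (Fin k)) :
    pderiv k l (fun y => ∏ i ∈ S, y i) 0 =
      if (↑l : Multiset (Fin k)) = S.val then 1 else 0 := by
  rw [pderiv_mono]
  by_cases heq : (↑l : Multiset (Fin k)) = S.val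
  · have hle : (↑l : Multiset (Fin k)) ≤ S.val := le_of_eq heq
    have htf : l.toFinset = S := by
      apply Finset.val_injective
      show (↑l.dedup : Multiset (Fin k)) = S.val
      rw [List.dedup_eq_self.2 (by rw [← Multiset.coe_nodup, heq]; exact S.nodup), heq]
    simp [hle, heq, htf]
  · rw [if_neg heq]
    by_cases hle : (↑l : Multiset (Fin k)) ≤ S.val
    · show (if (↑l : Multiset (Fin k)) ≤ S.val then ∏ i ∈ S \ l.toFinset, (0:ℝ) else 0) = 0
      rw [if_pos hle]
      have hne : (S \ l.toFinset).Nonempty := by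
        rw [Finset.sdiff_nonempty]
        intro hsub
        apply heq
        apply Multiset.eq_of_le_of_card_le hle
        calc Multiset.card S.val = S.card := rfl
          _ ≤ l.toFinset.card := Finset.card_le_card hsub
          _ ≤ l.length := l.toFinset_card_le
          _ = Multiset.card (↑l : Multiset (Fin k)) := rfl
      obtain ⟨a, ha⟩ := hne
      exact Finset.prod_eq_zero ha rfl
    · show (if (↑l : Multiset (Fin k)) ≤ S.val then ∏ i ∈ S \ l.toFinset, (0:ℝ) else 0) = 0
      rw [if_neg hle]

lemma nu_comm {k : ℕ} (out : Fin k → Fin k) (ν : Fin k → Fin k)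
    (h : ∀ v, Multiset.map ν (Finset.univ.filter fun u => out u = v).val
        = (Finset.univ.filter fun u => out u = ν v).val) (u : Fin k) :
    out (ν u) = ν (out u) := by
  have hu : ν u ∈ Multiset.map ν (Finset.univ.filter fun w => out w = out u).val :=
    Multiset.mem_map_of_mem ν (by rw [← Finset.mem_def]; simp)
  rw [h (out u), ← Finset.mem_def, Finset.mem_filter] at hu
  exact hu.2

lemma nu_bijective {k : ℕ} (out : Fin k → Fin k)
    (hconn : ∀ v w : Fin k,
      Relation.ReflTransGen (fun a b : Fin k => out a = b ∨ out b = a) v w)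
    (ν : Fin k → Fin k)
    (h : ∀ v, Multiset.map ν (Finset.univ.filter fun u => out u = v).val
        = (Finset.univ.filter fun u => out u = ν v).val) :
    Function.Bijective ν := by
  have hcomm := nu_comm out ν h
  set c : Fin k → ℕ := fun w => (Finset.univ.filter fun u => ν u = w).card with hc
  have step1 : ∀ w, c w = c (out w) := by
    intro w
    apply Finset.card_bij (fun u _ => out u)
    · intro a ha
      rw [Finset.mem_filter] at ha ⊢
      exact ⟨Finset.mem_univ _, by rw [← hcomm, ha.2]⟩
    · intro a1 ha1 a2 ha2 hout
      rw [Finset.mem_filter] at ha1 ha2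
      have hnd : (Multiset.map ν (Finset.univ.filter fun u => out u = out a1).val).Nodup := by
        rw [h]; exact Finset.nodup _
      refine Multiset.inj_on_of_nodup_map hnd a1 ?_ a2 ?_ (ha1.2.trans ha2.2.symm)
      · rw [← Finset.mem_def]; simp
      · rw [← Finset.mem_def]; simp [← hout]
    · intro b hb
      rw [Finset.mem_filter] at hb
      have hw : w ∈ Multiset.map ν (Finset.univ.filter fun u => out u = b).val := by
        rw [h, ← Finset.mem_def, Finset.mem_filter]
        exact ⟨Finset.mem_univ _, hb.2.symm⟩
      obtain ⟨u, hu, hνu⟩ := Multiset.mem_map.1 hw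
      rw [← Finset.mem_def, Finset.mem_filter] at hu
      exact ⟨u, Finset.mem_filter.2 ⟨Finset.mem_univ _, hνu⟩, hu.2⟩
  have step2 : ∀ v w, c v = c w := by
    intro v w
    induction hconn v w with
    | refl => rfl
    | tail _ hstep ih =>
      rcases hstep with h1 | h1
      · rw [ih, ← h1]; exact step1 _
      · rw [ih, ← h1]; exact (step1 _).symm
  have step3 : ∑ w : Fin k, c w = k := by
    rw [← Finset.card_eq_sum_card_fiberwise (f := ν) (t := Finset.univ)
      (fun x _ => Finset.mem_univ _)]
    simp
  have step4 : ∀ w, c w = 1 := by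
    intro w
    have hk : 0 < k := w.pos
    have hsum : k * c w = k := by
      conv_rhs => rw [← step3]
      rw [Finset.sum_congr rfl fun x _ => step2 x w, Finset.sum_const,
        Finset.card_univ, Fintype.card_fin, smul_eq_mul]
    exact Nat.eq_of_mul_eq_mul_left hk (by rw [hsum, mul_one])
  constructor
  · intro a b hab
    refine Finset.card_le_one.1 (le_of_eq (step4 (ν a))) a ?_ b ?_ <;>
      rw [Finset.mem_filter] <;> exact ⟨Finset.mem_univ _, by rw [hab]⟩
  · intro w
    have : (Finset.univ.filter fun u => ν u = w).Nonempty :=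
      Finset.card_pos.1 (lt_of_lt_of_le Nat.one_pos (step4 w).ge)
    obtain ⟨u, hu⟩ := this
    exact ⟨u, (Finset.mem_filter.1 hu).2⟩

lemma perm_cond {k : ℕ} (out : Fin k → Fin k) (π : Equiv.Perm (Fin k))
    (hπ : ∀ v, out (π v) = π (out v)) (v : Fin k) :
    Multiset.map π (Finset.univ.filter fun u => out u = v).val
      = (Finset.univ.filter fun u => out u = π v).val := by
  have himg : (Finset.univ.filter fun u => out u = v).image π
      = Finset.univ.filter fun u => out u = π v := by
    ext a
    simp only [Finset.mem_image, Finset.mem_filter, Finset.mem_univ, true_and]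
    constructor
    · rintro ⟨u, hu, rfl⟩; rw [hπ, hu]
    · intro ha
      refine ⟨π.symm a, ?_, π.apply_symm_apply a⟩
      have h2 : π (out (π.symm a)) = π v := by
        rw [← hπ, π.apply_symm_apply, ha]
      exact π.injective h2
  have h3 := congrArg Finset.val himg
  rwa [Finset.image_val, Multiset.dedup_eq_self.2 ((Finset.nodup _).map π.injective)] at h3

noncomputable def autEquiv {k : ℕ} (out : Fin k → Fin k)
    (hconn : ∀ v w : Fin k,
      Relation.ReflTransGen (fun a b : Fin k => out a = b ∨ out b = a) v w) :
    {ν : Fin k → Fin k // ∀ v, Multiset.map ν (Finset.univ.filter fun u => out u = v).val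
        = (Finset.univ.filter fun u => out u = ν v).val}
      ≃ {π : Equiv.Perm (Fin k) // ∀ v, out (π v) = π (out v)} where
  toFun := fun ⟨ν, hν⟩ =>
    ⟨Equiv.ofBijective ν (nu_bijective out hconn ν hν), fun v => nu_comm out ν hν v⟩
  invFun := fun ⟨π, hπ⟩ => ⟨⇑π, perm_cond out π hπ⟩
  left_inv := fun ⟨ν, hν⟩ => Subtype.ext rfl
  right_inv := fun ⟨π, hπ⟩ => Subtype.ext (Equiv.ext fun x => rfl)


/-- For an aromatic molecule `μ` with vertex set `[k]`
(connected, each vertex with one outgoing edge `out`), and the dual polynomial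
vector field `g^j(x) = ∏_{i ∈ P(j)} x_i`, the value `F(μ)(g)(0)` equals the
number of automorphisms of `μ`. -/
theorem dual_field_counts_automorphisms (k : ℕ) (out : Fin k → Fin k)
    (hconn : ∀ v w : Fin k,
      Relation.ReflTransGen (fun a b : Fin k => out a = b ∨ out b = a) v w) :
    eldScalar k out
        (fun x j => ∏ i ∈ Finset.univ.filter fun i => out i = j, x i) 0 =
      (Fintype.card {ν : Equiv.Perm (Fin k) // ∀ v, out (ν v) = ν (out v)} : ℝ) := by
  classical
  unfold eldScalar
  have key : ∀ (ν : Fin k → Fin k) (v : Fin k),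
      pderiv k (((Finset.univ.filter fun u => out u = v).toList).map ν)
        (fun y => ∏ i ∈ Finset.univ.filter fun i => out i = ν v, y i) 0
      = if Multiset.map ν (Finset.univ.filter fun u => out u = v).val
          = (Finset.univ.filter fun u => out u = ν v).val then 1 else 0 := by
    intro ν v
    rw [pderiv_mono_zero, ← Multiset.map_coe, Finset.coe_toList]
  calc (∑ ν : Fin k → Fin k, ∏ v : Fin k,
      pderiv k (((Finset.univ.filter fun u => out u = v).toList).map ν)
        (fun y => ∏ i ∈ Finset.univ.filter fun i => out i = ν v, y i) 0)
      = ∑ ν : Fin k → Fin k,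
        if (∀ v, Multiset.map ν (Finset.univ.filter fun u => out u = v).val
            = (Finset.univ.filter fun u => out u = ν v).val) then (1:ℝ) else 0 := by
        refine Finset.sum_congr rfl fun ν _ => ?_
        rw [Finset.prod_congr rfl fun v _ => key ν v, Finset.prod_boole]
        simp
        congr 1
    _ = ((Finset.univ.filter fun ν : Fin k → Fin k =>
          ∀ v, Multiset.map ν (Finset.univ.filter fun u => out u = v).val
            = (Finset.univ.filter fun u => out u = ν v).val).card : ℝ) := by
        rw [Finset.sum_boole]
    _ = (Fintype.card {ν : Equiv.Perm (Fin k) // ∀ v, out (ν v) = ν (out v)} : ℝ) := by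
        norm_cast
        rw [← Fintype.card_subtype]
        exact Fintype.card_congr (autEquiv out hconn)
end

section
/- Let γ, γ' be distinct connected aromatic forests each with one root, with vertex sets labeled so that V(γ') = [n]. Define the polynomial vector field g on ℝ^n by g^j(x) = Π_{i ∈ P'(j)} x_i, where P' denotes parents in γ'. Then the root component of the elementary differential F(γ)(g) evaluated at 0 is: σ(γ) if γ ≅ γ', and 0 otherwise, where only graph homomorphisms γ → γ' that are isomorphisms contribute a nonzero term at x = 0. -/
/-- One term `∏_v ∂_{ν(P(v))} g^{ν(v)}` of the elementary differential of the
aromatic forest given by `out`, for an assignment `ν : V → [n]`. -/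
noncomputable def eldTerm (n : ℕ) {V : Type} [Fintype V] [DecidableEq V]
    (out : V → Option V) (g : (Fin n → ℝ) → Fin n → ℝ)
    (ν : V → Fin n) (x : Fin n → ℝ) : ℝ :=
  ∏ v : V,
    pderiv n (((Finset.univ.filter fun u => out u = some v).toList).map ν)
      (fun y => g y (ν v)) x



lemma hasFDerivAt_monomial {n : ℕ} (S : Finset (Fin n)) (x : Fin n → ℝ) :
    HasFDerivAt (fun y : Fin n → ℝ => ∏ i ∈ S, y i)
      (∑ i ∈ S, (∏ j ∈ S.erase i, x j) •
        (ContinuousLinearMap.proj i : (Fin n → ℝ) →L[ℝ] ℝ)) x :=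
  HasFDerivAt.finset_prod fun i _ =>
    ((ContinuousLinearMap.proj i : (Fin n → ℝ) →L[ℝ] ℝ)).hasFDerivAt

lemma fderiv_monomial {n : ℕ} (S : Finset (Fin n)) (x : Fin n → ℝ) (i : Fin n) :
    fderiv ℝ (fun y : Fin n → ℝ => ∏ j ∈ S, y j) x (Pi.single i 1) =
      if i ∈ S then ∏ j ∈ S.erase i, x j else 0 := by
  rw [(hasFDerivAt_monomial S x).fderiv]
  simp only [ContinuousLinearMap.coe_sum', Finset.sum_apply,
    ContinuousLinearMap.coe_smul', Pi.smul_apply, ContinuousLinearMap.proj_apply,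
    Pi.single_apply, smul_eq_mul, mul_ite, mul_one, mul_zero]
  rw [Finset.sum_ite_eq' S i]

lemma pderiv_monomial {n : ℕ} (L : List (Fin n)) (S : Finset (Fin n)) :
    pderiv n L (fun y => ∏ i ∈ S, y i) =
      fun x => if L.Nodup ∧ ∀ i ∈ L, i ∈ S then ∏ i ∈ S \ L.toFinset, x i else 0 := by
  induction L with
  | nil => simp [pderiv]
  | cons i L ih =>
    funext x
    show fderiv ℝ (pderiv n L fun y => ∏ i ∈ S, y i) x (Pi.single i 1) = _
    rw [ih]
    by_cases hD : L.Nodup ∧ ∀ j ∈ L, j ∈ S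
    · have : (fun x : Fin n → ℝ => if L.Nodup ∧ ∀ i ∈ L, i ∈ S then ∏ i ∈ S \ L.toFinset, x i else 0)
          = fun x => ∏ j ∈ S \ L.toFinset, x j := by
        funext y; rw [if_pos hD]
      rw [this, fderiv_monomial]
      by_cases hi : i ∈ S \ L.toFinset
      · have hiS : i ∈ S := (Finset.mem_sdiff.mp hi).1
        have hiL : i ∉ L := by
          have := (Finset.mem_sdiff.mp hi).2; simpa using this
        rw [if_pos hi, if_pos]
        · congr 1
          ext j
          simp only [Finset.mem_erase, Finset.mem_sdiff, List.toFinset_cons,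
            Finset.mem_insert, List.mem_toFinset]
          tauto
        · refine ⟨List.nodup_cons.mpr ⟨hiL, hD.1⟩, ?_⟩
          intro j hj
          rcases List.mem_cons.mp hj with rfl | hj
          · exact hiS
          · exact hD.2 j hj
      · rw [if_neg hi, if_neg]
        intro ⟨h1, h2⟩
        apply hi
        rw [Finset.mem_sdiff]
        refine ⟨h2 i List.mem_cons_self, ?_⟩
        simpa using (List.nodup_cons.mp h1).1
    · have : (fun x : Fin n → ℝ => if L.Nodup ∧ ∀ i ∈ L, i ∈ S then ∏ i ∈ S \ L.toFinset, x i else 0)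
          = fun _ => (0:ℝ) := by
        funext y; rw [if_neg hD]
      rw [this, if_neg]
      · simp [fderiv_const]
      · intro ⟨h1, h2⟩
        exact hD ⟨(List.nodup_cons.mp h1).2, fun j hj => h2 j (List.mem_cons_of_mem i hj)⟩

lemma pderiv_monomial_zero {n : ℕ} (L : List (Fin n)) (S : Finset (Fin n)) :
    pderiv n L (fun y => ∏ i ∈ S, y i) 0 = if L.Nodup ∧ L.toFinset = S then 1 else 0 := by
  rw [pderiv_monomial]
  beta_reduce
  by_cases h1 : L.Nodup ∧ ∀ i ∈ L, i ∈ S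
  · rw [if_pos h1]
    by_cases h2 : S \ L.toFinset = ∅
    · have hTS : L.toFinset = S := by
        apply Finset.Subset.antisymm
        · intro j hj; exact h1.2 j (List.mem_toFinset.mp hj)
        · intro j hj
          by_contra hjL
          exact absurd (Finset.mem_sdiff.mpr ⟨hj, hjL⟩) (by rw [h2]; simp)
      rw [h2, if_pos ⟨h1.1, hTS⟩]; simp
    · obtain ⟨j, hj⟩ := Finset.nonempty_iff_ne_empty.mpr h2
      rw [Finset.prod_eq_zero hj (by simp), if_neg]
      intro ⟨_, hTS⟩
      exact absurd (Finset.mem_sdiff.mp hj).1 (by rw [← hTS]; exact (Finset.mem_sdiff.mp hj).2)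
  · rw [if_neg h1, if_neg]
    intro ⟨hn, hTS⟩
    exact h1 ⟨hn, fun i hi => hTS ▸ List.mem_toFinset.mpr hi⟩

lemma reach_of_conn {W : Type*} (out : W → Option W) (ρ : W) (hρ : out ρ = none)
    {v : W} (h : Relation.ReflTransGen (fun a b => out a = some b ∨ out b = some a) v ρ) :
    Relation.ReflTransGen (fun a b : W => out a = some b) v ρ := by
  induction h using Relation.ReflTransGen.head_induction_on with
  | refl => exact .refl
  | head h' _ ih =>
    rcases h' with h' | h'
    · exact ih.head h'
    · rcases ih.cases_head with rfl | ⟨d, hd, hdρ⟩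
      · rw [hρ] at h'; cases h'
      · rw [h'] at hd
        injection hd with hd
        rwa [hd]

lemma exists_iterate {W : Type*} (out : W → Option W) (ρ : W) {v : W}
    (h : Relation.ReflTransGen (fun a b : W => out a = some b) v ρ) :
    ∃ k, (fun w => (out w).getD w)^[k] v = ρ := by
  induction h using Relation.ReflTransGen.head_induction_on with
  | refl => exact ⟨0, rfl⟩
  | head h' _ ih =>
    obtain ⟨k, hk⟩ := ih
    refine ⟨k + 1, ?_⟩
    rw [Function.iterate_succ_apply]
    simpa [h'] using hk

lemma good_bijective {V : Type*} {n : ℕ}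
    (out : V → Option V) (r : V) (hr2 : ∀ v : V, out v = none → v = r)
    (out' : Fin n → Option (Fin n)) (r' : Fin n)
    (hr' : out' r' = none ∧ ∀ v : Fin n, out' v = none → v = r')
    (hreach' : ∀ y : Fin n, ∃ k, (fun w => (out' w).getD w)^[k] y = r')
    (ν : V → Fin n) (hνr : ν r = r')
    (hout : ∀ v, out' (ν v) = (out v).map ν)
    (hinj : ∀ w : V, ∀ a b : V, out a = some w → out b = some w → ν a = ν b → a = b)
    (himg : ∀ w : V, ∀ y : Fin n, out' y = some (ν w) → ∃ u, out u = some w ∧ ν u = y) :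
    Function.Bijective ν := by
  set f' : Fin n → Fin n := fun w => (out' w).getD w with hf'
  have hroot : ∀ a : V, ν a = r' → a = r := by
    intro a ha
    by_contra hne
    have h1 : out a ≠ none := fun hn => hne (hr2 a hn)
    obtain ⟨w, hw⟩ := Option.ne_none_iff_exists'.mp h1
    have := hout a
    rw [hw, ha, hr'.1] at this
    simp at this
  constructor
  · -- injective
    have key : ∀ k, ∀ a b : V, f'^[k] (ν a) = r' → ν a = ν b → a = b := by
      intro k
      induction k using Nat.strong_induction_on with
      | _ k IH =>
        intro a b hk hab
        by_cases ha : ν a = r'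
        · rw [hroot a ha, hroot b (hab ▸ ha)]
        · have hk0 : k ≠ 0 := by rintro rfl; exact ha hk
          have ha' : a ≠ r := fun h => ha (h ▸ hνr)
          have hb' : b ≠ r := fun h => ha (hab.trans (h ▸ hνr))
          obtain ⟨wa, hwa⟩ := Option.ne_none_iff_exists'.mp
            (fun hn => ha' (hr2 a hn))
          obtain ⟨wb, hwb⟩ := Option.ne_none_iff_exists'.mp
            (fun hn => hb' (hr2 b hn))
          have h1 : out' (ν a) = some (ν wa) := by rw [hout a, hwa]; rfl
          have h2 : out' (ν a) = some (ν wb) := by rw [hab, hout b, hwb]; rfl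
          have hw : ν wa = ν wb := by
            rw [h1] at h2; injection h2
          have hfa : f' (ν a) = ν wa := by rw [hf']; simp [h1]
          have hstep : f'^[k - 1] (ν wa) = r' := by
            rw [← hfa, ← Function.iterate_succ_apply, Nat.succ_eq_add_one,
              Nat.sub_add_cancel (Nat.one_le_iff_ne_zero.mpr hk0)]
            exact hk
          have := IH (k - 1) (Nat.sub_lt (Nat.pos_of_ne_zero hk0) one_pos) wa wb hstep hw
          subst this
          exact hinj wa a b hwa hwb hab
    intro a b hab
    obtain ⟨k, hk⟩ := hreach' (ν a)
    exact key k a b hk hab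
  · -- surjective
    have key2 : ∀ k, ∀ y : Fin n, f'^[k] y = r' → ∃ v, ν v = y := by
      intro k
      induction k using Nat.strong_induction_on with
      | _ k IH =>
        intro y hk
        by_cases hy : y = r'
        · exact ⟨r, by rw [hνr, hy]⟩
        · have hk0 : k ≠ 0 := by rintro rfl; exact hy hk
          obtain ⟨p, hp⟩ := Option.ne_none_iff_exists'.mp
            (fun hn : out' y = none => hy (hr'.2 y hn))
          have hfy : f' y = p := by rw [hf']; simp [hp]
          have hstep : f'^[k - 1] p = r' := by
            rw [← hfy, ← Function.iterate_succ_apply, Nat.succ_eq_add_one,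
              Nat.sub_add_cancel (Nat.one_le_iff_ne_zero.mpr hk0)]
            exact hk
          obtain ⟨v, hv⟩ := IH (k - 1) (Nat.sub_lt (Nat.pos_of_ne_zero hk0) one_pos) p hstep
          obtain ⟨u, _, hu⟩ := himg v y (by rw [hv]; exact hp)
          exact ⟨u, hu⟩
    intro y
    obtain ⟨k, hk⟩ := hreach' y
    exact key2 k y hk

lemma hom_symm {A B : Type*} (f : A ≃ B) (outA : A → Option A) (outB : B → Option B)
    (hf : ∀ v, outB (f v) = (outA v).map f) (w : B) :
    outA (f.symm w) = (outB w).map f.symm := by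
  have h := hf (f.symm w)
  rw [f.apply_symm_apply] at h
  rw [h, Option.map_map, Equiv.symm_comp_self, Option.map_id]
  rfl

lemma hom_comp {A B C : Type*} (f : A ≃ B) (g : B ≃ C)
    (outA : A → Option A) (outB : B → Option B) (outC : C → Option C)
    (hf : ∀ v, outB (f v) = (outA v).map f) (hg : ∀ w, outC (g w) = (outB w).map g)
    (v : A) : outC ((f.trans g) v) = (outA v).map (f.trans g) := by
  show outC (g (f v)) = _
  rw [hg, hf, Option.map_map]
  rfl

/-- The condition that picks out one term of the elementary differential at 0. -/
def IsGoodAt {V : Type} [Fintype V] [DecidableEq V] {n : ℕ} (out : V → Option V)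
    (out' : Fin n → Option (Fin n)) (ν : V → Fin n) (v : V) : Prop :=
  (((Finset.univ.filter fun u => out u = some v).toList).map ν).Nodup ∧
  (((Finset.univ.filter fun u => out u = some v).toList).map ν).toFinset =
    Finset.univ.filter fun u => out' u = some (ν v)

noncomputable instance IsGoodAt.dec {V : Type} [Fintype V] [DecidableEq V] {n : ℕ} (out : V → Option V)
    (out' : Fin n → Option (Fin n)) (ν : V → Fin n) (v : V) :
    Decidable (IsGoodAt out out' ν v) := by
  unfold IsGoodAt; infer_instance

lemma good_image {V : Type} [Fintype V] [DecidableEq V] {n : ℕ} {out : V → Option V}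
    {out' : Fin n → Option (Fin n)} {ν : V → Fin n} {v : V}
    (h : IsGoodAt out out' ν v) :
    Finset.image ν (Finset.univ.filter fun u => out u = some v) =
      Finset.univ.filter fun u => out' u = some (ν v) := by
  rw [← h.2]
  ext y
  simp only [List.mem_toFinset, List.mem_map, Finset.mem_toList, Finset.mem_image]

lemma good_of_equiv {V : Type} [Fintype V] [DecidableEq V] {n : ℕ}
    (out : V → Option V) (out' : Fin n → Option (Fin n)) (e : V ≃ Fin n)
    (he : ∀ v : V, out' (e v) = (out v).map e) (v : V) :
    IsGoodAt out out' (⇑e) v := by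
  constructor
  · exact (Finset.nodup_toList _).map e.injective
  · ext y
    simp only [List.mem_toFinset, List.mem_map, Finset.mem_toList, Finset.mem_filter,
      Finset.mem_univ, true_and]
    constructor
    · rintro ⟨u, hu, rfl⟩
      rw [he u, hu]
      rfl
    · intro hy
      refine ⟨e.symm y, ?_, e.apply_symm_apply y⟩
      have h := he (e.symm y)
      rw [e.apply_symm_apply, hy] at h
      obtain ⟨w, hw, hew⟩ := Option.map_eq_some_iff.mp h.symm
      rw [hw, e.injective hew]

lemma count_good {V : Type} [Fintype V] [DecidableEq V] {n : ℕ}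
    (out : V → Option V) (r : V)
    (hr : out r = none ∧ ∀ v : V, out v = none → v = r)
    (out' : Fin n → Option (Fin n)) (r' : Fin n)
    (hr' : out' r' = none ∧ ∀ v : Fin n, out' v = none → v = r')
    (hconn' : ∀ v w : Fin n,
      Relation.ReflTransGen (fun a b : Fin n => out' a = some b ∨ out' b = some a) v w) :
    Fintype.card {ν : V → Fin n // ν r = r' ∧ ∀ v : V, IsGoodAt out out' ν v} =
      Fintype.card {e : V ≃ Fin n // ∀ v : V, out' (e v) = (out v).map e} := by
  have hreach' : ∀ y : Fin n, ∃ k, (fun w => (out' w).getD w)^[k] y = r' := fun y =>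
    exists_iterate out' r' (reach_of_conn out' r' hr'.1 (hconn' y r'))
  refine Fintype.card_congr ?_
  have hbij : ∀ ν : V → Fin n, ν r = r' → (∀ v : V, IsGoodAt out out' ν v) →
      Function.Bijective ν ∧ (∀ v : V, out' (ν v) = (out v).map ν) := by
    intro ν hνr hQ
    have hout : ∀ v : V, out' (ν v) = (out v).map ν := by
      intro v
      cases h : out v with
      | none => rw [hr.2 v h, hνr, hr'.1]; rfl
      | some w =>
        have hv : ν v ∈ Finset.image ν (Finset.univ.filter fun u => out u = some w) :=
          Finset.mem_image_of_mem _ (by simp [h])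
        rw [good_image (hQ w)] at hv
        simpa using (Finset.mem_filter.mp hv).2
    refine ⟨good_bijective out r hr.2 out' r' hr' hreach' ν hνr hout ?_ ?_, hout⟩
    · intro w a b ha hb hab
      exact List.inj_on_of_nodup_map (hQ w).1 (Finset.mem_toList.mpr (by simp [ha]))
        (Finset.mem_toList.mpr (by simp [hb])) hab
    · intro w y hy
      have : y ∈ Finset.image ν (Finset.univ.filter fun u => out u = some w) := by
        rw [good_image (hQ w)]; simp [hy]
      obtain ⟨u, hu, hu2⟩ := Finset.mem_image.mp this
      exact ⟨u, by simpa using (Finset.mem_filter.mp hu).2, hu2⟩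
  refine
    { toFun := fun ν =>
        ⟨Equiv.ofBijective ν.1 (hbij ν.1 ν.2.1 ν.2.2).1, (hbij ν.1 ν.2.1 ν.2.2).2⟩
      invFun := fun e =>
        ⟨⇑e.1, ?_, fun v => good_of_equiv out out' e.1 e.2 v⟩
      left_inv := fun ν => Subtype.ext rfl
      right_inv := fun e => Subtype.ext (Equiv.ext fun v => rfl) }
  have h := e.2 r
  rw [hr.1] at h
  exact hr'.2 _ h

/-- Let `γ` (vertex set `V`, root `r`) and `γ'` (vertex set
`[n]`, root `r'`) be connected one-root aromatic forests, and let
`g^j(x) = ∏_{i ∈ P'(j)} x_i` be the dual vector field of `γ'`. Then the root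
component of `F(γ)(g)` at `0` is `σ(γ)` if `γ ≅ γ'` and `0` otherwise. -/
theorem dual_tree_field (n : ℕ) {V : Type} [Fintype V] [DecidableEq V]
    (out : V → Option V) (r : V)
    (hr : out r = none ∧ ∀ v : V, out v = none → v = r)
    (hconn : ∀ v w : V,
      Relation.ReflTransGen (fun a b : V => out a = some b ∨ out b = some a) v w)
    (out' : Fin n → Option (Fin n)) (r' : Fin n)
    (hr' : out' r' = none ∧ ∀ v : Fin n, out' v = none → v = r')
    (hconn' : ∀ v w : Fin n,
      Relation.ReflTransGen (fun a b : Fin n => out' a = some b ∨ out' b = some a) v w)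
    (g : (Fin n → ℝ) → Fin n → ℝ)
    (hg : g = fun x j => ∏ i ∈ Finset.univ.filter fun i => out' i = some j, x i) :
    ((∃ e : V ≃ Fin n, ∀ v : V, out' (e v) = (out v).map e) →
      (∑ ν : V → Fin n, if ν r = r' then eldTerm n out g ν 0 else 0) =
        (Fintype.card {e : V ≃ V // ∀ v : V, out (e v) = (out v).map e} : ℝ)) ∧
    ((¬ ∃ e : V ≃ Fin n, ∀ v : V, out' (e v) = (out v).map e) →
      (∑ ν : V → Fin n, if ν r = r' then eldTerm n out g ν 0 else 0) = 0) := by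
  subst hg
  have hterm : ∀ ν : V → Fin n,
      eldTerm n out (fun x j => ∏ i ∈ Finset.univ.filter fun i => out' i = some j, x i) ν 0 =
        if ∀ v : V, IsGoodAt out out' ν v then 1 else 0 := by
    intro ν
    unfold eldTerm
    rw [Finset.prod_congr rfl fun v _ =>
      pderiv_monomial_zero ((Finset.univ.filter fun u => out u = some v).toList.map ν)
        (Finset.univ.filter fun u => out' u = some (ν v))]
    rw [Finset.prod_boole]
    unfold IsGoodAt
    split_ifs with h1 h2 <;> first | rfl | simp_all
  have hsum : ∀ ν : V → Fin n,
      (if ν r = r' then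
        eldTerm n out (fun x j => ∏ i ∈ Finset.univ.filter fun i => out' i = some j, x i) ν 0
       else 0) =
        if ν r = r' ∧ ∀ v : V, IsGoodAt out out' ν v then (1 : ℝ) else 0 := by
    intro ν
    rw [hterm ν]
    by_cases h1 : ν r = r' <;> by_cases h2 : ∀ v : V, IsGoodAt out out' ν v <;>
      simp [h1, h2]
  have key : (∑ ν : V → Fin n,
      if ν r = r' then
        eldTerm n out (fun x j => ∏ i ∈ Finset.univ.filter fun i => out' i = some j, x i) ν 0
      else 0) =
        (Fintype.card {e : V ≃ Fin n // ∀ v : V, out' (e v) = (out v).map e} : ℝ) := by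
    rw [Finset.sum_congr rfl fun ν _ => hsum ν, Finset.sum_boole]
    rw [← Fintype.card_subtype, count_good out r hr out' r' hr' hconn']
  constructor
  · rintro ⟨e0, he0⟩
    rw [key]
    congr 1
    refine Fintype.card_congr
      ⟨fun e => ⟨e.1.trans e0.symm, fun v =>
          hom_comp e.1 e0.symm out out' out e.2 (hom_symm e0 out out' he0) v⟩,
        fun σ => ⟨σ.1.trans e0, fun v => hom_comp σ.1 e0 out out out' σ.2 he0 v⟩,
        fun e => Subtype.ext (Equiv.ext fun v => by simp),
        fun σ => Subtype.ext (Equiv.ext fun v => by simp)⟩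
  · intro h
    rw [key, Fintype.card_eq_zero_iff.mpr ⟨fun e => h ⟨e.1, e.2⟩⟩]
    simp
end

section
/- Let φ_n : C^∞_c(ℝ^n, ℝ^n) → C^∞_c(ℝ^n, ℝ^n) be smooth maps forming an affine equivariant sequence with φ_n(0) = 0. Fix k ∈ ℕ and define the homogeneous Taylor term Δ_k(φ_n)(f) := D^kφ_n(0)[f,…,f]. Then the sequence {Δ_k(φ_n)} is also affine equivariant: if an affine map a : ℝ^n → ℝ^m, a(x) = Ax + b, and f ∈ C^∞_c(ℝ^n, ℝ^n), g ∈ C^∞_c(ℝ^m, ℝ^m) satisfy g∘a = A∘f, then Δ_k(φ_m)(g)∘a = A∘Δ_k(φ_n)(f). -/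
/-- The k-th homogeneous Taylor term
`Δ_k(φ_n)(f) = D^k φ_n(0)[f,…,f] = (d/ds)^k φ_n(s f)|_{s=0}` of an affine
equivariant sequence of smooth maps with `φ_n(0) = 0` is again an affine
equivariant sequence. -/
theorem taylor_term_equivariant (k : ℕ)
    (φ : ∀ n : ℕ, ((Fin n → ℝ) → Fin n → ℝ) → ((Fin n → ℝ) → Fin n → ℝ))
    (hzero : ∀ n : ℕ, φ n (fun _ => 0) = fun _ => 0)
    (hsmooth : ∀ (n : ℕ) (f : (Fin n → ℝ) → Fin n → ℝ) (x : Fin n → ℝ),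
      ContDiff ℝ (⊤ : ℕ∞) (fun s : ℝ => φ n (s • f) x))
    (hequi : ∀ (n m : ℕ) (A : (Fin n → ℝ) →ₗ[ℝ] (Fin m → ℝ)) (b : Fin m → ℝ)
      (f : (Fin n → ℝ) → Fin n → ℝ) (g : (Fin m → ℝ) → Fin m → ℝ),
      (∀ x, g (A x + b) = A (f x)) → ∀ x, φ m g (A x + b) = A (φ n f x)) :
    ∀ (n m : ℕ) (A : (Fin n → ℝ) →ₗ[ℝ] (Fin m → ℝ)) (b : Fin m → ℝ)
      (f : (Fin n → ℝ) → Fin n → ℝ) (g : (Fin m → ℝ) → Fin m → ℝ),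
      (∀ x, g (A x + b) = A (f x)) →
      ∀ x, iteratedDeriv k (fun s : ℝ => φ m (s • g) (A x + b)) 0 =
        A (iteratedDeriv k (fun s : ℝ => φ n (s • f) x) 0) := by
  intro n m A b f g hfg x
  set A' : (Fin n → ℝ) →L[ℝ] (Fin m → ℝ) := A.toContinuousLinearMap with hA'
  have hrel : ∀ s : ℝ, φ m (s • g) (A x + b) = A' (φ n (s • f) x) := by
    intro s
    exact hequi n m A b (s • f) (s • g)
      (fun y => by simp [Pi.smul_apply, hfg y, map_smul]) x
  have h1 : (fun s : ℝ => φ m (s • g) (A x + b))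
      = fun s : ℝ => A' (φ n (s • f) x) := funext hrel
  rw [h1]
  have := A'.iteratedFDeriv_comp_left (f := fun s : ℝ => φ n (s • f) x)
    (hsmooth n f x).contDiffAt (x := (0 : ℝ)) (i := k) (by exact_mod_cast le_top)
  simp only [iteratedDeriv, ← Function.comp_def] at *
  rw [this]
  rfl
end
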